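/- Let (Ω, μ) be a probability space, let k ≥ 1, and let (Y i)_{i ∈ ℕ} be measurable random variables Ω → ℝ each taking only the values 0 and 1, such that almost surely the set {i : Y i ω = 1} is finite. Define X ω = ∑'_{i} Y i ω. Suppose that X^k is integrable and that, for each 1 ≤ m ≤ k, the family A ↦ E[∏_{i ∈ A} Y i], indexed by the finite subsets A of ℕ with |A| = m, is summable. Then E[X^k] = ∑_{m=1}^{k} S(k,m) · (∑'_{A ⊂ ℕ finite, |A| = m} E[∏_{i ∈ A} Y i]). -/
import Mathlib


open Finset MeasureTheory

/-- `S k m` is the number of surjections from a `k`-element set onto an `m`-element set. -/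
noncomputable def surjCount (k m : ℕ) : ℕ :=
  Nat.card {f : Fin k → Fin m // Function.Surjective f}

lemma card_fiber (k n : ℕ) (A : Finset (Fin n)) :
    ((univ : Finset (Fin k → Fin n)).filter fun f => Finset.image f univ = A).card
      = Nat.card {g : Fin k → (A : Set (Fin n)) // Function.Surjective g} := by
  classical
  rw [← Fintype.card_subtype, ← Nat.card_eq_fintype_card]
  refine Nat.card_congr ?_
  refine ⟨fun f => ⟨fun j => ⟨f.1 j, Finset.mem_coe.mpr (by have h : f.1 j ∈ Finset.image f.1 univ := mem_image.mpr ⟨j, mem_univ j, rfl⟩; rwa [f.2] at h)⟩, ?_⟩,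
    fun g => ⟨fun j => (g.1 j).1, ?_⟩, fun f => rfl, fun g => rfl⟩
  · rintro ⟨a, ha⟩
    have : a ∈ Finset.image f.1 univ := by rw [f.2]; exact ha
    obtain ⟨j, _, hj⟩ := mem_image.mp this
    exact ⟨j, Subtype.ext hj⟩
  · ext a
    simp only [mem_image, mem_univ, true_and]
    constructor
    · rintro ⟨j, rfl⟩; exact (g.1 j).2
    · intro ha
      obtain ⟨j, hj⟩ := g.2 ⟨a, ha⟩
      exact ⟨j, congrArg Subtype.val hj⟩

lemma surjCount_card {k : ℕ} {α : Type*} [Fintype α] :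
    Nat.card {g : Fin k → α // Function.Surjective g} = surjCount k (Fintype.card α) := by
  refine Nat.card_congr (Equiv.subtypeEquiv
    (Equiv.arrowCongr (Equiv.refl (Fin k)) (Fintype.equivFin α)) fun g => ?_)
  simp [Equiv.arrowCongr, Function.Surjective]
  constructor
  · intro h b
    obtain ⟨a, ha⟩ := h ((Fintype.equivFin α).symm b)
    exact ⟨a, by simp [ha]⟩
  · intro h b
    obtain ⟨a, ha⟩ := h (Fintype.equivFin α b)
    exact ⟨a, (Fintype.equivFin α).injective (by simp [ha])⟩

lemma surjCount_zero {k : ℕ} (hk : 1 ≤ k) : surjCount k 0 = 0 := by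
  have : IsEmpty {f : Fin k → Fin 0 // Function.Surjective f} :=
    ⟨fun ⟨f, _⟩ => (f ⟨0, hk⟩).elim0⟩
  simp [surjCount, Nat.card_of_isEmpty]

lemma surjCount_of_lt {k m : ℕ} (h : k < m) : surjCount k m = 0 := by
  have : IsEmpty {f : Fin k → Fin m // Function.Surjective f} := by
    constructor
    rintro ⟨f, hf⟩
    have := Fintype.card_le_of_surjective f hf
    simp only [Fintype.card_fin] at this
    omega
  simp [surjCount, Nat.card_of_isEmpty]

lemma pow_eq_sum_surjCount (k n : ℕ) (hk : 1 ≤ k) :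
    n ^ k = ∑ m ∈ Icc 1 k, surjCount k m * n.choose m := by
  classical
  have h1 : n ^ k = (univ : Finset (Fin k → Fin n)).card := by
    rw [← Fintype.card_fin n, ← Fintype.card_fin k]
    simp [Fintype.card_fun]
  have h2 := card_eq_sum_card_fiberwise
    (f := fun f : Fin k → Fin n => Finset.image f univ)
    (s := univ) (t := (univ : Finset (Fin n)).powerset)
    (fun f _ => mem_powerset.mpr (subset_univ _))
  have h3 : ∀ A ∈ (univ : Finset (Fin n)).powerset,
      ((univ : Finset (Fin k → Fin n)).filter fun f => Finset.image f univ = A).card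
        = surjCount k A.card := by
    intro A _
    rw [card_fiber]
    have : Fintype.card (A : Set (Fin n)) = A.card := by
      simp
    rw [surjCount_card, this]
  rw [h1, h2, Finset.sum_congr rfl h3, Finset.sum_powerset_apply_card (surjCount k)]
  simp only [card_univ, Fintype.card_fin, smul_eq_mul]
  -- now: ∑ m ∈ range (n+1), n.choose m * surjCount k m = ∑ m ∈ Icc 1 k, surjCount k m * n.choose m
  set M := max (n + 1) (k + 1) with hM
  have hN : ∑ m ∈ range (n + 1), n.choose m * surjCount k m
      = ∑ m ∈ range M, n.choose m * surjCount k m :=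
    Finset.sum_subset (Finset.range_subset_range.mpr (le_max_left _ _)) fun m _ hm => by
      rw [Nat.choose_eq_zero_of_lt (by simpa using hm), zero_mul]
  have hsub : Icc 1 k ⊆ range M := fun m hm => mem_range.mpr
    (lt_of_le_of_lt (mem_Icc.mp hm).2 (lt_of_lt_of_le (Nat.lt_succ_self k) (le_max_right _ _)))
  have hIcc : ∑ m ∈ Icc 1 k, surjCount k m * n.choose m
      = ∑ m ∈ range M, surjCount k m * n.choose m :=
    Finset.sum_subset hsub fun m _ hm => by
      rw [mem_Icc] at hm
      push_neg at hm
      rcases Nat.lt_or_ge m 1 with h | h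
      · obtain rfl : m = 0 := by omega
        rw [surjCount_zero hk, zero_mul]
      · rw [surjCount_of_lt (hm h), zero_mul]
  rw [hN, hIcc]
  exact Finset.sum_congr rfl fun m _ => mul_comm _ _

lemma one_le_surjCount {k m : ℕ} (hm : 1 ≤ m) (hmk : m ≤ k) : 1 ≤ surjCount k m := by
  have hne : Nonempty {f : Fin k → Fin m // Function.Surjective f} := by
    refine ⟨⟨fun j => ⟨min j.1 (m - 1), by omega⟩, fun i => ?_⟩⟩
    refine ⟨⟨i.1, lt_of_lt_of_le i.2 hmk⟩, ?_⟩
    ext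
    simp only
    omega
  exact Nat.one_le_iff_ne_zero.mpr (Nat.card_ne_zero.mpr ⟨hne, inferInstance⟩)

lemma key_pointwise (k : ℕ) (hk : 1 ≤ k) (y : ℕ → ℝ) (h01 : ∀ i, y i = 0 ∨ y i = 1)
    (hfin : {i | y i = 1}.Finite) :
    (∑' i, y i) ^ k = ∑ m ∈ Icc 1 k, (surjCount k m : ℝ) *
      ∑' A : {A : Finset ℕ // A.card = m}, ∏ i ∈ A.1, y i := by
  classical
  set s := hfin.toFinset with hs
  have hy1 : ∀ i ∈ s, y i = 1 := fun i hi => by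
    simpa [hs, Set.Finite.mem_toFinset] using hi
  have hy0 : ∀ i ∉ s, y i = 0 := fun i hi =>
    (h01 i).resolve_right (by simpa [hs, Set.Finite.mem_toFinset] using hi)
  have hX : ∑' i, y i = (s.card : ℝ) := by
    rw [tsum_eq_sum (fun i hi => hy0 i hi), Finset.sum_congr rfl hy1]
    simp
  have hprod : ∀ A : Finset ℕ, (∏ i ∈ A, y i) = if A ⊆ s then 1 else 0 := by
    intro A
    split_ifs with h
    · exact Finset.prod_eq_one fun i hi => hy1 i (h hi)
    · obtain ⟨i, hiA, his⟩ := Finset.not_subset.mp h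
      exact Finset.prod_eq_zero hiA (hy0 i his)
  have hg : ∀ m : ℕ, (∑' A : {A : Finset ℕ // A.card = m}, ∏ i ∈ A.1, y i)
      = (s.card.choose m : ℝ) := by
    intro m
    set T : Finset {A : Finset ℕ // A.card = m} :=
      (Finset.powersetCard m s).attach.map
        ⟨fun B => ⟨B.1, (Finset.mem_powersetCard.mp B.2).2⟩,
         by intro a b hab; simp only [Subtype.mk.injEq] at hab; exact Subtype.ext hab⟩ with hT
    have hmemT : ∀ b : {A : Finset ℕ // A.card = m}, b.1 ⊆ s → b ∈ T := by
      intro b hb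
      rw [hT, Finset.mem_map]
      exact ⟨⟨b.1, Finset.mem_powersetCard.mpr ⟨hb, b.2⟩⟩, Finset.mem_attach _ _,
        Subtype.ext rfl⟩
    have hout : ∀ b ∉ T, (∏ i ∈ (b : {A : Finset ℕ // A.card = m}).1, y i) = 0 := by
      intro b hb
      rw [hprod, if_neg (fun hsub => hb (hmemT b hsub))]
    rw [tsum_eq_sum hout]
    have hone : ∀ b ∈ T, (∏ i ∈ (b : {A : Finset ℕ // A.card = m}).1, y i) = 1 := by
      intro b hb
      rw [hT, Finset.mem_map] at hb
      obtain ⟨B, _, rfl⟩ := hb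
      exact (hprod _).trans (if_pos (Finset.mem_powersetCard.mp B.2).1)
    rw [Finset.sum_congr rfl hone, Finset.sum_const, nsmul_eq_mul, mul_one, hT]
    simp [Finset.card_powersetCard]
  rw [hX]
  have := pow_eq_sum_surjCount k s.card hk
  have hcast : ((s.card : ℝ)) ^ k = ((s.card ^ k : ℕ) : ℝ) := by push_cast; ring
  rw [hcast, this]
  push_cast
  exact Finset.sum_congr rfl fun m _ => by rw [hg m]


theorem bernoulli_infinite_sum_moment {Ω : Type*} [MeasurableSpace Ω] (μ : Measure Ω)
    [IsProbabilityMeasure μ] (k : ℕ) (hk : 1 ≤ k) (Y : ℕ → Ω → ℝ)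
    (hmeas : ∀ i, Measurable (Y i)) (h01 : ∀ i ω, Y i ω = 0 ∨ Y i ω = 1)
    (hfin : ∀ᵐ ω ∂μ, {i : ℕ | Y i ω = 1}.Finite)
    (X : Ω → ℝ) (hX : ∀ ω, X ω = ∑' i : ℕ, Y i ω)
    (hint : Integrable (fun ω => X ω ^ k) μ)
    (hsum : ∀ m, 1 ≤ m → m ≤ k →
      Summable (fun A : {A : Finset ℕ // A.card = m} => ∫ ω, ∏ i ∈ A.1, Y i ω ∂μ)) :
    (∫ ω, X ω ^ k ∂μ) =
      ∑ m ∈ Finset.Icc 1 k,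
        (surjCount k m : ℝ) *
          ∑' A : {A : Finset ℕ // A.card = m}, ∫ ω, ∏ i ∈ A.1, Y i ω ∂μ := by
  classical
  set f : (m : ℕ) → {A : Finset ℕ // A.card = m} → Ω → ℝ :=
    fun m A ω => ∏ i ∈ A.1, Y i ω with hfdef
  have hf0 : ∀ m (A : {A : Finset ℕ // A.card = m}) ω, 0 ≤ f m A ω := fun m A ω =>
    Finset.prod_nonneg fun i _ => by rcases h01 i ω with h | h <;> simp [h]
  have hf1 : ∀ m (A : {A : Finset ℕ // A.card = m}) ω, f m A ω ≤ 1 := fun m A ω =>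
    Finset.prod_le_one (fun i _ => by rcases h01 i ω with h | h <;> simp [h])
      (fun i _ => by rcases h01 i ω with h | h <;> simp [h])
  have hfmeas : ∀ m (A : {A : Finset ℕ // A.card = m}), Measurable (f m A) := fun m A =>
    Finset.measurable_prod _ fun i _ => hmeas i
  have hfint : ∀ m (A : {A : Finset ℕ // A.card = m}), Integrable (f m A) μ := fun m A =>
    (integrable_const (1 : ℝ)).mono' (hfmeas m A).aestronglyMeasurable
      (Filter.Eventually.of_forall fun ω => by
        rw [Real.norm_of_nonneg (hf0 m A ω)]; exact hf1 m A ω)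
  set g : ℕ → Ω → ℝ := fun m ω => ∑' A : {A : Finset ℕ // A.card = m}, f m A ω with hgdef
  have hgmeas : ∀ m, Measurable (g m) := by
    intro m
    have h1 : Measurable fun ω =>
        ((∑' A : {A : Finset ℕ // A.card = m}, Real.toNNReal (f m A ω) : NNReal) : ℝ) :=
      (Measurable.nnreal_tsum fun A => (hfmeas m A).real_toNNReal).coe_nnreal_real
    convert h1 using 1
    funext ω
    rw [hgdef]
    simp only
    rw [NNReal.coe_tsum]
    congr 1
    funext A
    rw [Real.coe_toNNReal _ (hf0 m A ω)]
  have hg0 : ∀ m ω, 0 ≤ g m ω := fun m ω => tsum_nonneg fun A => hf0 m A ω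
  have h_ae : ∀ᵐ ω ∂μ, X ω ^ k =
      ∑ m ∈ Finset.Icc 1 k, (surjCount k m : ℝ) * g m ω := by
    filter_upwards [hfin] with ω hω
    rw [hX ω]
    exact key_pointwise k hk (fun i => Y i ω) (fun i => h01 i ω) hω
  have hgle : ∀ m ∈ Finset.Icc 1 k, ∀ᵐ ω ∂μ, g m ω ≤ X ω ^ k := by
    intro m hm
    filter_upwards [h_ae] with ω hω
    rw [hω]
    rw [Finset.mem_Icc] at hm
    calc g m ω = 1 * g m ω := (one_mul _).symm
      _ ≤ (surjCount k m : ℝ) * g m ω := by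
          apply mul_le_mul_of_nonneg_right _ (hg0 m ω)
          exact_mod_cast one_le_surjCount hm.1 hm.2
      _ ≤ ∑ m' ∈ Finset.Icc 1 k, (surjCount k m' : ℝ) * g m' ω :=
          Finset.single_le_sum (f := fun m' => (surjCount k m' : ℝ) * g m' ω)
            (fun m' _ => mul_nonneg (by positivity) (hg0 m' ω)) (Finset.mem_Icc.mpr hm)
  have hgint : ∀ m ∈ Finset.Icc 1 k, Integrable (g m) μ := by
    intro m hm
    refine hint.mono' (hgmeas m).aestronglyMeasurable ?_
    filter_upwards [hgle m hm] with ω hω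
    rwa [Real.norm_of_nonneg (hg0 m ω)]
  have hswap : ∀ m ∈ Finset.Icc 1 k, ∫ ω, g m ω ∂μ
      = ∑' A : {A : Finset ℕ // A.card = m}, ∫ ω, f m A ω ∂μ := by
    intro m hm
    rw [Finset.mem_Icc] at hm
    refine (integral_tsum_of_summable_integral_norm (fun A => hfint m A) ?_).symm
    have heq : (fun A : {A : Finset ℕ // A.card = m} => ∫ ω, ‖f m A ω‖ ∂μ)
        = fun A : {A : Finset ℕ // A.card = m} => ∫ ω, f m A ω ∂μ := by
      funext A
      exact integral_congr_ae (Filter.Eventually.of_forall fun ω =>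
        Real.norm_of_nonneg (hf0 m A ω))
    rw [heq]
    exact hsum m hm.1 hm.2
  calc (∫ ω, X ω ^ k ∂μ)
      = ∫ ω, ∑ m ∈ Finset.Icc 1 k, (surjCount k m : ℝ) * g m ω ∂μ :=
        integral_congr_ae h_ae
    _ = ∑ m ∈ Finset.Icc 1 k, ∫ ω, (surjCount k m : ℝ) * g m ω ∂μ :=
        integral_finset_sum _ fun m hm => ((hgint m hm).const_mul _)
    _ = ∑ m ∈ Finset.Icc 1 k, (surjCount k m : ℝ) * ∫ ω, g m ω ∂μ :=
        Finset.sum_congr rfl fun m _ => integral_const_mul _ _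
    _ = ∑ m ∈ Finset.Icc 1 k,
        (surjCount k m : ℝ) *
          ∑' A : {A : Finset ℕ // A.card = m}, ∫ ω, ∏ i ∈ A.1, Y i ω ∂μ :=
        Finset.sum_congr rfl fun m hm => by rw [hswap m hm]
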